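/- arXiv:2202.06156 — 6 statements merged into one kernel-verified Lean document; each statement's English description precedes it below -/
import Mathlib

section
/- For 0 < α, β < 1, n ≥ 2, and 1 ≤ i ≤ n−1, the coefficients satisfy c_{n,i} < c_{n−1,i}, where c_{n,i} := (1/(β Γ(β))) · ((1 − ((i−1)/n)^{α/β})^β − (1 − (i/n)^{α/β})^β). -/
/-!
Write `c α β n i = K · g(1/n)` with `K = 1 / (β Γ(β))`, `γ = α / β` and
`g(s) = (1 - ((i-1) s)^γ)^β - (1 - (i s)^γ)^β`, so the claim is `g(1/n) < g(1/(n-1))`.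
With `φ(x) = (1 - x^γ)^β` one has `s g'(s) = ψ(i s) - ψ((i-1) s)`, where
`ψ(x) = x φ'(x) / (-β γ) = x^γ (1 - x^γ)^(β-1)`. For `β ≤ 1` both factors of `ψ` increase on `[0, 1)`,
so `g` is strictly increasing on `[0, 1/i]`, which contains `1/n < 1/(n-1)`.
-/

/-- Rectangle-rule discretization weights of the Erdélyi–Kober integral. -/
noncomputable def c (α β : ℝ) (n i : ℕ) : ℝ :=
  (1 / (β * Real.Gamma β)) *
    ((1 - (((i : ℝ) - 1) / n) ^ (α / β)) ^ β - (1 - ((i : ℝ) / n) ^ (α / β)) ^ β)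

open Real Set

section OneSubRpowRpow

variable {β γ : ℝ}

lemma hasDerivAt_one_sub_mul_rpow_rpow (hγ : 0 < γ) {q s : ℝ} (hq : 0 ≤ q) (hs : 0 < s)
    (hqs : q * s < 1) :
    HasDerivAt (fun t => (1 - (q * t) ^ γ) ^ β)
      (-(β * γ / s) * ((q * s) ^ γ * (1 - (q * s) ^ γ) ^ (β - 1))) s := by
  rcases hq.eq_or_lt with rfl | hq
  · simpa [zero_rpow hγ.ne'] using hasDerivAt_const s (1 : ℝ)
  have hqs0 : 0 < q * s := mul_pos hq hs
  have hlt : (q * s) ^ γ < 1 := rpow_lt_one hqs0.le hqs hγ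
  have h := ((((hasDerivAt_id' s).const_mul q).rpow_const (p := γ) (Or.inl hqs0.ne')).const_sub
    1).rpow_const (p := β) (Or.inl (sub_pos.2 hlt).ne')
  convert h using 1
  rw [rpow_sub_one hqs0.ne']
  field_simp

lemma strictMonoOn_rpow_mul_one_sub_rpow_rpow (hγ : 0 < γ) (hβ : β ≤ 1) :
    StrictMonoOn (fun x : ℝ => x ^ γ * (1 - x ^ γ) ^ (β - 1)) (Ico 0 1) := by
  intro x ⟨hx0, hx1⟩ y ⟨hy0, hy1⟩ hxy
  have hxyγ : x ^ γ < y ^ γ := rpow_lt_rpow hx0 hxy hγ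
  have hyγ : y ^ γ < 1 := rpow_lt_one hy0 hy1 hγ
  calc x ^ γ * (1 - x ^ γ) ^ (β - 1) < y ^ γ * (1 - x ^ γ) ^ (β - 1) :=
        mul_lt_mul_of_pos_right hxyγ (rpow_pos_of_pos (by linarith) _)
    _ ≤ y ^ γ * (1 - y ^ γ) ^ (β - 1) :=
        mul_le_mul_of_nonneg_left (rpow_le_rpow_of_nonpos (by linarith) (by linarith)
          (by linarith)) (rpow_nonneg hy0 γ)

lemma strictMonoOn_one_sub_rpow_rpow_sub (hγ : 0 < γ) (hβ : 0 < β) (hβ1 : β ≤ 1) {p q : ℝ}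
    (hp : 0 ≤ p) (hpq : p < q) :
    StrictMonoOn (fun s => (1 - (p * s) ^ γ) ^ β - (1 - (q * s) ^ γ) ^ β) (Icc 0 q⁻¹) := by
  have hq : 0 < q := hp.trans_lt hpq
  have hcont : ∀ r : ℝ, Continuous fun s : ℝ => (1 - (r * s) ^ γ) ^ β := fun r =>
    (continuous_const.sub ((continuous_const.mul continuous_id).rpow_const
      fun _ => Or.inr hγ.le)).rpow_const fun _ => Or.inr hβ.le
  refine strictMonoOn_of_deriv_pos (convex_Icc _ _) ((hcont p).sub (hcont q)).continuousOn ?_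
  intro s hs
  rw [interior_Icc] at hs
  obtain ⟨hs0, hsq⟩ := hs
  have hqs : q * s < 1 := by rwa [← lt_div_iff₀' hq, one_div]
  have hpq_s : p * s < q * s := mul_lt_mul_of_pos_right hpq hs0
  have hderiv : deriv (fun t => (1 - (p * t) ^ γ) ^ β - (1 - (q * t) ^ γ) ^ β) s =
      β * γ / s * ((q * s) ^ γ * (1 - (q * s) ^ γ) ^ (β - 1)
        - (p * s) ^ γ * (1 - (p * s) ^ γ) ^ (β - 1)) :=
    ((hasDerivAt_one_sub_mul_rpow_rpow hγ hp hs0 (hpq_s.trans hqs)).sub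
      (hasDerivAt_one_sub_mul_rpow_rpow hγ hq.le hs0 hqs)).deriv.trans (by ring)
  rw [hderiv]
  have hψ := strictMonoOn_rpow_mul_one_sub_rpow_rpow hγ hβ1
    ⟨mul_nonneg hp hs0.le, hpq_s.trans hqs⟩ ⟨(mul_pos hq hs0).le, hqs⟩ hpq_s
  exact mul_pos (by positivity) (sub_pos.2 hψ)

end OneSubRpowRpow

theorem stmt_3_general (α β : ℝ) (hα : 0 < α) (hβ : 0 < β) (hβ1 : β < 1)
    (n i : ℕ) (hn : 2 ≤ n) (hi1 : 1 ≤ i) (hin : i ≤ n - 1) :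
    c α β n i < c α β (n - 1) i := by
  have hK : 0 < 1 / (β * Gamma β) := by have := Gamma_pos_of_pos hβ; positivity
  have hn1 : ((n - 1 : ℕ) : ℝ) = n - 1 := by rw [Nat.cast_sub (by omega), Nat.cast_one]
  have hn2 : (2 : ℝ) ≤ n := by exact_mod_cast hn
  have hi : (1 : ℝ) ≤ i := by exact_mod_cast hi1
  have hin' : (i : ℝ) ≤ n - 1 := by rw [← hn1]; exact_mod_cast hin
  have hg := strictMonoOn_one_sub_rpow_rpow_sub (div_pos hα hβ) hβ hβ1.le (sub_nonneg.2 hi)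
    (sub_one_lt (i : ℝ))
    ⟨by positivity, inv_anti₀ (by linarith) (by linarith)⟩
    ⟨inv_nonneg.2 (by linarith), inv_anti₀ (by linarith) hin'⟩
    (inv_strictAnti₀ (by linarith) (sub_one_lt (n : ℝ)))
  simp only [c, hn1, div_eq_mul_inv ((i : ℝ) - 1), div_eq_mul_inv (i : ℝ)]
  exact mul_lt_mul_of_pos_left hg hK

theorem stmt_3 (α β : ℝ) (hα : 0 < α) (hα1 : α < 1) (hβ : 0 < β) (hβ1 : β < 1)
    (n i : ℕ) (hn : 2 ≤ n) (hi1 : 1 ≤ i) (hin : i ≤ n - 1) :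
    c α β n i < c α β (n - 1) i :=
  stmt_3_general α β hα hβ hβ1 n i hn hi1 hin
end

section
/- Fix 0 < α, β < 1. For every n > 1 and every i ∈ {1,…,n−1}, (n + α)·c_{n,i} − n·c_{n−1,i} < 0, where c_{n,i} := (1/(β Γ(β))) · ((1 − ((i−1)/n)^{α/β})^β − (1 − (i/n)^{α/β})^β). -/
open Real Set

lemma one_add_mul_one_sub_inv_le_rpow {x p : ℝ} (hx : 0 < x) (hp : 0 ≤ p) :
    1 + p * (1 - x⁻¹) ≤ x ^ p :=
  calc 1 + p * (1 - x⁻¹) ≤ p * log x + 1 := by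
        nlinarith [mul_le_mul_of_nonneg_left (one_sub_inv_le_log_of_pos hx) hp]
    _ ≤ exp (p * log x) := add_one_le_exp _
    _ = x ^ p := by rw [rpow_def_of_pos hx, mul_comm]

lemma add_le_mul_rpow_div_sub_one {N α p : ℝ} (hN : 1 < N) (hαp : α ≤ p) (hp : 0 ≤ p) :
    N + α ≤ N * (N / (N - 1)) ^ p := by
  have hN0 : 0 < N := by linarith
  have hinv : 1 - (N / (N - 1))⁻¹ = N⁻¹ := by
    field_simp [(by linarith : N - 1 ≠ 0)]
    ring
  have h := one_add_mul_one_sub_inv_le_rpow (x := N / (N - 1)) (div_pos hN0 (by linarith)) hp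
  rw [hinv] at h
  calc N + α ≤ N * (1 + p * N⁻¹) := by field_simp; linarith
    _ ≤ N * (N / (N - 1)) ^ p := mul_le_mul_of_nonneg_left h hN0.le

lemma hasDerivAt_one_sub_rpow_rpow {p β τ : ℝ} (hτ : τ ≠ 0) (hτp : τ ^ p ≠ 1) :
    HasDerivAt (fun t => (1 - t ^ p) ^ β) (-(β * p * τ ^ (p - 1) * (1 - τ ^ p) ^ (β - 1))) τ := by
  convert (((hasDerivAt_id' τ).rpow_const (Or.inl hτ)).const_sub 1).rpow_const
    (p := β) (Or.inl (sub_ne_zero.mpr hτp.symm)) using 1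
  ring

lemma strictAntiOn_mul_one_sub_rpow_rpow_sub {l p β A B : ℝ} (hl : 1 < l) (hp : 0 < p)
    (hβ : 0 < β) (hβ1 : β < 1) (hA : 0 < A) (hB : B ≤ A * l ^ p) :
    StrictAntiOn (fun τ => A * (1 - (l * τ) ^ p) ^ β - B * (1 - τ ^ p) ^ β) (Icc 0 l⁻¹) := by
  have hl0 : 0 < l := by linarith
  refine strictAntiOn_of_deriv_neg (convex_Icc 0 l⁻¹) (by fun_prop (disch := positivity)) ?_
  intro τ hτ
  rw [interior_Icc] at hτ
  obtain ⟨hτ0, hτl⟩ := hτ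
  have hlτ : τ < l * τ := by nlinarith
  have hlτ1 : l * τ < 1 := by
    simpa [hl0.ne'] using mul_lt_mul_of_pos_left hτl hl0
  have hτp : τ ^ p < 1 := rpow_lt_one hτ0.le (hlτ.trans hlτ1) hp
  have hlτp : (l * τ) ^ p < 1 := rpow_lt_one (by positivity) hlτ1 hp
  have hpow : (1 - τ ^ p) ^ (β - 1) < (1 - (l * τ) ^ p) ^ (β - 1) :=
    rpow_lt_rpow_of_neg (by linarith) (by linarith [rpow_lt_rpow hτ0.le hlτ hp]) (by linarith)
  have hderiv : HasDerivAt (fun τ => A * (1 - (l * τ) ^ p) ^ β - B * (1 - τ ^ p) ^ β)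
      (A * (-(β * p * (l * τ) ^ (p - 1) * (1 - (l * τ) ^ p) ^ (β - 1)) * (l * 1))
        - B * -(β * p * τ ^ (p - 1) * (1 - τ ^ p) ^ (β - 1))) τ :=
    (((hasDerivAt_one_sub_rpow_rpow (by positivity) hlτp.ne).comp τ
      ((hasDerivAt_id' τ).const_mul l)).const_mul A).sub
      ((hasDerivAt_one_sub_rpow_rpow hτ0.ne' hτp.ne).const_mul B)
  rw [hderiv.deriv]
  have hscale : l * (l * τ) ^ (p - 1) = l ^ p * τ ^ (p - 1) := by
    rw [mul_rpow hl0.le hτ0.le, ← mul_assoc, ← rpow_one_add' hl0.le (by linarith), add_sub_cancel]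
  have hβp : 0 < β * p * τ ^ (p - 1) := by positivity
  have hcompare : B * (1 - τ ^ p) ^ (β - 1) < A * l ^ p * (1 - (l * τ) ^ p) ^ (β - 1) :=
    calc B * (1 - τ ^ p) ^ (β - 1) ≤ A * l ^ p * (1 - τ ^ p) ^ (β - 1) :=
          mul_le_mul_of_nonneg_right hB (rpow_nonneg (by linarith) _)
      _ < A * l ^ p * (1 - (l * τ) ^ p) ^ (β - 1) :=
          mul_lt_mul_of_pos_left hpow (by positivity)
  calc _ = β * p * τ ^ (p - 1) *
        (B * (1 - τ ^ p) ^ (β - 1) - A * l ^ p * (1 - (l * τ) ^ p) ^ (β - 1)) := by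
        linear_combination (-(A * β * p * (1 - (l * τ) ^ p) ^ (β - 1))) * hscale
    _ < 0 := mul_neg_of_pos_of_neg hβp (by linarith)

theorem stmt_4_general (α β : ℝ) (hα : 0 < α) (hβ : 0 < β) (hβ1 : β < 1)
    (n i : ℕ) (hn : 1 < n) (hi1 : 1 ≤ i) (hin : i ≤ n - 1) :
    ((n : ℝ) + α) * c α β n i - (n : ℝ) * c α β (n - 1) i < 0 := by
  have hn' : (1 : ℝ) < n := by exact_mod_cast hn
  have hi1' : (1 : ℝ) ≤ i := by exact_mod_cast hi1
  have hin' : (i : ℝ) ≤ n - 1 := by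
    rw [← Nat.cast_one, ← Nat.cast_sub hn.le]; exact_mod_cast hin
  have hn0 : (0 : ℝ) < n := by linarith
  set l : ℝ := n / (n - 1)
  have hl : 1 < l := (one_lt_div (by linarith)).mpr (by linarith)
  have hinv : l⁻¹ = (n - 1) / n := inv_div _ _
  have hD := strictAntiOn_mul_one_sub_rpow_rpow_sub hl (div_pos hα hβ) hβ hβ1
    hn0
    (add_le_mul_rpow_div_sub_one hn' (le_div_self hα.le hβ hβ1.le) (div_pos hα hβ).le)
  have ha : ((i : ℝ) - 1) / n ∈ Icc 0 l⁻¹ :=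
    ⟨by positivity, by rw [hinv]; exact div_le_div_of_nonneg_right (by linarith) hn0.le⟩
  have hb : (i : ℝ) / n ∈ Icc 0 l⁻¹ :=
    ⟨by positivity, by rw [hinv]; exact div_le_div_of_nonneg_right hin' hn0.le⟩
  have hab := hD ha hb (div_lt_div_of_pos_right (by linarith) hn0)
  have hshift (x : ℝ) : x / (n - 1) = l * (x / n) := by
    simp only [l]
    field_simp [(by linarith : (n : ℝ) - 1 ≠ 0)]
  have hK : 0 < 1 / (β * Gamma β) := by have := Gamma_pos_of_pos hβ; positivity
  rw [c, c, Nat.cast_sub hn.le, Nat.cast_one, hshift, hshift]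
  linarith [mul_lt_mul_of_pos_left hab hK]

theorem stmt_4 (α β : ℝ) (hα : 0 < α) (hα1 : α < 1) (hβ : 0 < β) (hβ1 : β < 1)
    (n i : ℕ) (hn : 1 < n) (hi1 : 1 ≤ i) (hin : i ≤ n - 1) :
    ((n : ℝ) + α) * c α β n i - (n : ℝ) * c α β (n - 1) i < 0 :=
  stmt_4_general α β hα hβ hβ1 n i hn hi1 hin
end

section
/- Fix 0 < α, β < 1 and n ≥ 2. For τ ∈ (0, n−1), the function f(τ,n) = (1 + α/n)·(τ/n)^{α/β−1}·(1 − (τ/n)^{α/β})^{β−1} − (1 + 1/(n−1))·(τ/(n−1))^{α/β−1}·(1 − (τ/(n−1))^{α/β})^{β−1} has no zero, i.e., f(τ,n) < 0 for all τ ∈ (0, n−1). -/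
/-!
Put `x = τ / n`, `y = τ / (n - 1)` and `γ = α / β`, so that `x = c y` with `c = (n - 1) / n`, and
`f(τ, n)` compares `(1 + α / n) x ^ (γ - 1) (1 - x ^ γ) ^ (β - 1)` with
`(1 + 1 / (n - 1)) y ^ (γ - 1) (1 - y ^ γ) ^ (β - 1)`. As `β < 1` and `x < y < 1`, the last factor is
strictly larger at `y`. The prefactors satisfy the inequality the same way round because
`1 + 1 / (n - 1) = 1 / c` and `(1 + α / n) c ^ γ ≤ (1 + α / n) c ^ α ≤ e ^ (α / n) e ^ (-α / n) = 1`,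
using `γ ≥ α` (from `β ≤ 1`) and `1 + t ≤ e ^ t` twice.
-/

open Real

lemma one_add_mul_mul_one_sub_rpow_le_one {a s : ℝ} (ha : 0 ≤ a) (hs : s ≤ 1) :
    (1 + a * s) * (1 - s) ^ a ≤ 1 :=
  calc (1 + a * s) * (1 - s) ^ a ≤ exp (a * s) * exp (-s) ^ a := by
        have hs' : 0 ≤ 1 - s := by linarith
        gcongr
        · linarith [add_one_le_exp (a * s)]
        · linarith [add_one_le_exp (-s)]
    _ = 1 := by rw [← exp_mul, ← exp_add, ← exp_zero]; ring_nf

lemma one_add_div_mul_sub_one_div_rpow_le_one {α γ n : ℝ} (hα : 0 ≤ α) (hαγ : α ≤ γ)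
    (hn : 1 < n) : (1 + α / n) * ((n - 1) / n) ^ γ ≤ 1 := by
  have hn0 : 0 < n := by linarith
  have hc : (n - 1) / n = 1 - 1 / n := by field_simp
  have hc0 : 0 < (n - 1) / n := div_pos (by linarith) hn0
  have hc1 : (n - 1) / n ≤ 1 := (div_le_one hn0).2 (by linarith)
  calc (1 + α / n) * ((n - 1) / n) ^ γ ≤ (1 + α * (1 / n)) * (1 - 1 / n) ^ α := by
        rw [← hc, mul_one_div]
        exact mul_le_mul_of_nonneg_left (rpow_le_rpow_of_exponent_ge hc0 hc1 hαγ) (by positivity)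
    _ ≤ 1 := one_add_mul_mul_one_sub_rpow_le_one hα ((div_le_one hn0).2 hn.le)

lemma one_add_div_mul_div_rpow_le {α γ n τ : ℝ} (hα : 0 ≤ α) (hαγ : α ≤ γ) (hn : 1 < n)
    (hτ : 0 < τ) :
    (1 + α / n) * (τ / n) ^ (γ - 1) ≤ (1 + 1 / (n - 1)) * (τ / (n - 1)) ^ (γ - 1) := by
  have hn0 : 0 < n := by linarith
  have hm : 0 < n - 1 := by linarith
  set c := (n - 1) / n with hc
  have hc0 : 0 < c := div_pos hm hn0
  have hx : τ / n = c * (τ / (n - 1)) := by rw [hc]; field_simp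
  have hinv : 1 + 1 / (n - 1) = 1 / c := by rw [hc]; field_simp; ring
  rw [hx, mul_rpow hc0.le (div_pos hτ hm).le, rpow_sub_one hc0.ne', hinv, ← mul_assoc]
  gcongr
  rw [← mul_div_assoc, div_le_div_iff_of_pos_right hc0]
  exact one_add_div_mul_sub_one_div_rpow_le_one hα hαγ hn

lemma one_sub_rpow_rpow_lt_of_lt {β γ x y : ℝ} (hβ : β < 1) (hγ : 0 < γ) (hx : 0 ≤ x)
    (hxy : x < y) (hy : y < 1) : (1 - x ^ γ) ^ (β - 1) < (1 - y ^ γ) ^ (β - 1) := by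
  have hyγ : y ^ γ < 1 := rpow_lt_one (hx.trans hxy.le) hy hγ
  have hxγ : x ^ γ < y ^ γ := rpow_lt_rpow hx hxy hγ
  exact rpow_lt_rpow_of_neg (by linarith) (by linarith) (by linarith)

theorem stmt_5_general (α β : ℝ) (hα : 0 < α) (hβ : 0 < β) (hβ1 : β < 1)
    (n : ℕ) (τ : ℝ) (hτ : τ ∈ Set.Ioo 0 ((n : ℝ) - 1)) :
    (1 + α / n) * (τ / n) ^ (α / β - 1) * (1 - (τ / n) ^ (α / β)) ^ (β - 1)
      - (1 + 1 / ((n : ℝ) - 1)) * (τ / ((n : ℝ) - 1)) ^ (α / β - 1) *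
        (1 - (τ / ((n : ℝ) - 1)) ^ (α / β)) ^ (β - 1) < 0 := by
  obtain ⟨hτ0, hτn⟩ := hτ
  have hm : (0 : ℝ) < n - 1 := hτ0.trans hτn
  have hn : (1 : ℝ) < n := by linarith
  have hαγ : α ≤ α / β := by rw [le_div_iff₀ hβ]; nlinarith
  have hxy : τ / n < τ / (n - 1) := div_lt_div_of_pos_left hτ0 hm (by linarith)
  have hprefactor := one_add_div_mul_div_rpow_le hα.le hαγ hn hτ0
  have hlast := one_sub_rpow_rpow_lt_of_lt hβ1 (div_pos hα hβ) (by positivity) hxy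
    ((div_lt_one hm).2 hτn)
  have hprefactor_pos : 0 < (1 + 1 / ((n : ℝ) - 1)) * (τ / (n - 1)) ^ (α / β - 1) := by
    have := div_pos hτ0 hm
    positivity
  have hlast_nonneg : 0 ≤ (1 - (τ / n) ^ (α / β)) ^ (β - 1) := by
    have := rpow_lt_one (by positivity) (hxy.trans ((div_lt_one hm).2 hτn)) (div_pos hα hβ)
    exact rpow_nonneg (by linarith) _
  linarith [mul_lt_mul' hprefactor hlast hlast_nonneg hprefactor_pos]

theorem stmt_5 (α β : ℝ) (hα : 0 < α) (hα1 : α < 1) (hβ : 0 < β) (hβ1 : β < 1)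
    (n : ℕ) (hn : 2 ≤ n) (τ : ℝ) (hτ : τ ∈ Set.Ioo 0 ((n : ℝ) - 1)) :
    (1 + α / n) * (τ / n) ^ (α / β - 1) * (1 - (τ / n) ^ (α / β)) ^ (β - 1)
      - (1 + 1 / ((n : ℝ) - 1)) * (τ / ((n : ℝ) - 1)) ^ (α / β - 1) *
        (1 - (τ / ((n : ℝ) - 1)) ^ (α / β)) ^ (β - 1) < 0 :=
  stmt_5_general α β hα hβ hβ1 n τ hτ
end

section
/- For 0 < α, β < 1 and n ≥ 2, the map n ↦ g(n) := n^{α/β}/(n−1)^{α/β} − (n^{α+1}/((n−1)^α (n+α)))^{1/(β−1)} is strictly decreasing in n and tends to 0 as n → ∞; consequently g(n) > 0 for every n > 1. -/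
/-- Auxiliary function in the sign analysis of the discretization coefficients. -/
noncomputable def g (α β : ℝ) (n : ℕ) : ℝ :=
  (n : ℝ) ^ (α / β) / ((n : ℝ) - 1) ^ (α / β)
    - ((n : ℝ) ^ (α + 1) / (((n : ℝ) - 1) ^ α * ((n : ℝ) + α))) ^ (1 / (β - 1))

/-!
Write `g α β n = (n / (n - 1)) ^ (α / β) - b(n) ^ (1 / (β - 1))` with
`b(x) = x ^ (α + 1) / ((x - 1) ^ α * (x + α))`. The first base decreases and its exponent is
positive. The logarithm of `b` has derivative `-α (α + 1) / (x (x - 1) (x + α)) < 0`, so `b`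
decreases too, and the negative exponent makes the second term increase. Both bases tend to `1`,
so `g α β n → 0`, and a strictly decreasing sequence with limit `0` is positive.
-/

open Real Filter Set Topology

theorem StrictAntiOn.lt_of_tendsto_atTop {ι γ : Type*} [LinearOrder ι] [NoMaxOrder ι]
    [TopologicalSpace γ] [Preorder γ] [OrderClosedTopology γ] {f : ι → γ} {a : ι} {b : γ}
    (hf : StrictAntiOn f (Ici a)) (hb : Tendsto f atTop (𝓝 b)) {x : ι} (hx : a ≤ x) :
    b < f x := by
  have : Nonempty ι := ⟨x⟩
  obtain ⟨y, hxy⟩ := exists_gt x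
  have hay : a ≤ y := hx.trans hxy.le
  have hby : b ≤ f y := le_of_tendsto hb <| (eventually_ge_atTop y).mono fun z hyz ↦
    hf.antitoneOn hay (hay.trans hyz) hyz
  exact hby.trans_lt (hf hx hay hxy)

noncomputable def gBase (α x : ℝ) : ℝ := x ^ (α + 1) / ((x - 1) ^ α * (x + α))

theorem strictAntiOn_div_sub_one : StrictAntiOn (fun x : ℝ ↦ x / (x - 1)) (Ioi 1) := by
  intro x (hx : 1 < x) y (hy : 1 < y) hxy
  rw [div_lt_div_iff₀ (by linarith) (by linarith)]
  linarith

theorem hasDerivAt_logGBase {α x : ℝ} (hα : 0 ≤ α) (hx : 1 < x) :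
    HasDerivAt (fun x ↦ (α + 1) * log x - α * log (x - 1) - log (x + α))
      (-(α * (α + 1)) / (x * (x - 1) * (x + α))) x := by
  have hx0 : x ≠ 0 := by linarith
  have hx1 : x - 1 ≠ 0 := by linarith
  have hxα : x + α ≠ 0 := by linarith
  refine (((((hasDerivAt_id' x).log hx0).const_mul (α + 1)).sub
    ((((hasDerivAt_id' x).sub_const 1).log hx1).const_mul α)).sub
    (((hasDerivAt_id' x).add_const α).log hxα)).congr_deriv ?_
  field_simp
  ring

theorem strictAntiOn_logGBase {α : ℝ} (hα : 0 < α) :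
    StrictAntiOn (fun x ↦ (α + 1) * log x - α * log (x - 1) - log (x + α)) (Ioi 1) := by
  refine strictAntiOn_of_deriv_neg (convex_Ioi 1)
    (fun x hx ↦ (hasDerivAt_logGBase hα.le hx).continuousAt.continuousWithinAt) fun x hx ↦ ?_
  rw [interior_Ioi] at hx
  have hx : 1 < x := hx
  rw [(hasDerivAt_logGBase hα.le hx).deriv]
  have : 0 < x * (x - 1) * (x + α) := by
    have : 0 < x - 1 := by linarith
    positivity
  exact div_neg_of_neg_of_pos (by nlinarith) this

theorem log_gBase {α x : ℝ} (hα : 0 ≤ α) (hx : 1 < x) :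
    log (gBase α x) = (α + 1) * log x - α * log (x - 1) - log (x + α) := by
  have hx0 : 0 < x := by linarith
  have hx1 : 0 < x - 1 := by linarith
  have hxα : 0 < x + α := by linarith
  rw [gBase, log_div (by positivity) (by positivity), log_mul (by positivity) hxα.ne',
    log_rpow hx0, log_rpow hx1]
  ring

theorem gBase_pos {α x : ℝ} (hα : 0 ≤ α) (hx : 1 < x) : 0 < gBase α x := by
  have : 0 < x - 1 := by linarith
  have : 0 < x + α := by linarith
  unfold gBase
  positivity

theorem strictAntiOn_gBase {α : ℝ} (hα : 0 < α) : StrictAntiOn (gBase α) (Ioi 1) := by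
  intro x (hx : 1 < x) y (hy : 1 < y) hxy
  rw [← log_lt_log_iff (gBase_pos hα.le hy) (gBase_pos hα.le hx), log_gBase hα.le hx,
    log_gBase hα.le hy]
  exact strictAntiOn_logGBase hα hx hy hxy

theorem g_eq_sub_rpow_gBase (α β : ℝ) {n : ℕ} (hn : 1 ≤ n) :
    g α β n = ((n : ℝ) / (n - 1)) ^ (α / β) - gBase α n ^ (1 / (β - 1)) := by
  rw [g, gBase, div_rpow (Nat.cast_nonneg n) (sub_nonneg.2 (by exact_mod_cast hn))]

theorem strictAntiOn_g {α β : ℝ} (hα : 0 < α) (hβ : 0 < β) (hβ1 : β < 1) :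
    StrictAntiOn (g α β) (Ici 2) := by
  intro m (hm : 2 ≤ m) n (hn : 2 ≤ n) hmn
  have hm' : (1 : ℝ) < m := by exact_mod_cast hm
  have hn' : (1 : ℝ) < n := by exact_mod_cast hn
  have hmn' : (m : ℝ) < n := by exact_mod_cast hmn
  have hfirst : ((n : ℝ) / (n - 1)) ^ (α / β) < ((m : ℝ) / (m - 1)) ^ (α / β) :=
    rpow_lt_rpow (div_nonneg (by positivity) (by linarith))
      (strictAntiOn_div_sub_one hm' hn' hmn') (by positivity)
  have hsecond : gBase α m ^ (1 / (β - 1)) < gBase α n ^ (1 / (β - 1)) :=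
    rpow_lt_rpow_of_neg (gBase_pos hα.le hn') (strictAntiOn_gBase hα hm' hn' hmn')
      (one_div_neg.2 (by linarith))
  rw [g_eq_sub_rpow_gBase α β (by omega), g_eq_sub_rpow_gBase α β (by omega)]
  linarith

theorem tendsto_gBase (α : ℝ) : Tendsto (fun n : ℕ ↦ gBase α n) atTop (𝓝 1) := by
  have h := ((tendsto_natCast_div_add_atTop (-1 : ℝ)).rpow_const (p := α) (.inl one_ne_zero)).mul
    (tendsto_natCast_div_add_atTop α)
  rw [one_rpow, one_mul] at h
  refine h.congr' ?_
  filter_upwards [eventually_gt_atTop 1,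
    tendsto_natCast_atTop_atTop.eventually_gt_atTop (-α)] with n hn hnα
  have hn' : (1 : ℝ) < n := by exact_mod_cast hn
  have : (0 : ℝ) < n - 1 := by linarith
  rw [gBase, rpow_add_one (by positivity), ← sub_eq_add_neg, div_rpow (by positivity) this.le]
  field_simp

theorem tendsto_g (α β : ℝ) : Tendsto (g α β) atTop (𝓝 0) := by
  have h := ((tendsto_natCast_div_add_atTop (-1 : ℝ)).rpow_const (p := α / β)
    (.inl one_ne_zero)).sub ((tendsto_gBase α).rpow_const (p := 1 / (β - 1)) (.inl one_ne_zero))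
  rw [one_rpow, one_rpow, sub_self] at h
  refine h.congr' ?_
  filter_upwards [eventually_ge_atTop 1] with n hn
  rw [g_eq_sub_rpow_gBase α β hn, sub_eq_add_neg (n : ℝ)]

theorem stmt_6_general (α β : ℝ) (hα : 0 < α) (hβ : 0 < β) (hβ1 : β < 1) :
    StrictAntiOn (g α β) {n : ℕ | 2 ≤ n} ∧
      Filter.Tendsto (g α β) Filter.atTop (nhds 0) ∧
      ∀ n : ℕ, 1 < n → 0 < g α β n :=
  ⟨strictAntiOn_g hα hβ hβ1, tendsto_g α β,
    fun _ hn ↦ (strictAntiOn_g hα hβ hβ1).lt_of_tendsto_atTop (tendsto_g α β) hn⟩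

theorem stmt_6 (α β : ℝ) (hα : 0 < α) (hα1 : α < 1) (hβ : 0 < β) (hβ1 : β < 1) :
    StrictAntiOn (g α β) {n : ℕ | 2 ≤ n} ∧
      Filter.Tendsto (g α β) Filter.atTop (nhds 0) ∧
      ∀ n : ℕ, 1 < n → 0 < g α β n :=
  stmt_6_general α β hα hβ hβ1
end

section
/- The Mainardi (M-Wright) function M_μ(z) := Σ_{n=0}^∞ (−z)^n / (n! Γ(−μn + 1 − μ)) evaluated at μ = 1/2 satisfies M_{1/2}(z) = (1/√π) e^{−z²/4} for all real z. -/
/-- The Mainardi (M-Wright) function. -/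
noncomputable def mainardi (μ : ℝ) (z : ℝ) : ℝ :=
  ∑' n : ℕ, (-z) ^ n / ((n.factorial : ℝ) * Real.Gamma (-μ * n + (1 - μ)))

lemma gamma_half_sub (k : ℕ) :
    Real.Gamma (1/2 - k) = (-4 : ℝ)^k * k.factorial * Real.sqrt Real.pi / (2*k).factorial := by
  induction k with
  | zero => norm_num [Real.Gamma_one_half_eq]
  | succ k ih =>
    have hx : (-(1/2 : ℝ) - k) ≠ 0 := by
      have : (0:ℝ) ≤ k := Nat.cast_nonneg k
      nlinarith
    have h1 : Real.Gamma ((-(1/2:ℝ) - k) + 1) = (-(1/2:ℝ) - k) * Real.Gamma (-(1/2:ℝ) - k) :=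
      Real.Gamma_add_one hx
    have e1 : (-(1/2:ℝ) - k) + 1 = 1/2 - k := by ring
    have e2 : (-(1/2:ℝ) - (k:ℝ)) = 1/2 - ((k:ℝ)+1) := by ring
    rw [e1, e2] at h1
    have hG : Real.Gamma (1/2 - ((k:ℝ)+1)) = Real.Gamma (1/2 - (k:ℝ)) / (-(1/2:ℝ) - k) := by
      rw [eq_div_iff hx]
      rw [e2] at hx
      rw [h1]; ring
    have hfac : ((2 * (k+1)).factorial : ℝ) = (2*(k:ℝ)+2) * (2*(k:ℝ)+1) * (2*k).factorial := by
      have h : 2 * (k+1) = (2*k+1) + 1 := by ring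
      rw [h, Nat.factorial_succ, Nat.factorial_succ]
      push_cast; ring
    have h2k : ((2*k).factorial : ℝ) ≠ 0 := Nat.cast_ne_zero.2 (Nat.factorial_ne_zero _)
    have h2k1 : (2*(k:ℝ)+1) ≠ 0 := by positivity
    have h2k2 : (2*(k:ℝ)+2) ≠ 0 := by positivity
    have ecast : ((k+1 : ℕ) : ℝ) = (k:ℝ)+1 := by push_cast; ring
    have hks : (((k+1).factorial : ℕ) : ℝ) = ((k:ℝ)+1) * k.factorial := by
      rw [Nat.factorial_succ]; push_cast; ring
    have hden1 : ((2*k).factorial : ℝ) * (-(1/2:ℝ) - k) ≠ 0 := mul_ne_zero h2k hx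
    have hden2 : (2*(k:ℝ)+2) * (2*(k:ℝ)+1) * ((2*k).factorial : ℝ) ≠ 0 :=
      mul_ne_zero (mul_ne_zero h2k2 h2k1) h2k
    rw [ecast, hG, ih, hfac, hks, pow_succ, div_div, div_eq_div_iff hden1 hden2]
    ring

theorem stmt_11 (z : ℝ) :
    mainardi (1 / 2) z = (1 / Real.sqrt Real.pi) * Real.exp (-z ^ 2 / 4) := by
  unfold mainardi
  set f : ℕ → ℝ :=
    fun n => (-z) ^ n / ((n.factorial : ℝ) * Real.Gamma (-(1/2) * n + (1 - 1/2))) with hf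
  have hinj : Function.Injective (fun k : ℕ => 2 * k) := fun a b h => by simp only [] at h; omega
  have hsupp : Function.support f ⊆ Set.range (fun k : ℕ => 2 * k) := by
    intro n hn
    rcases Nat.even_or_odd n with ⟨k, hk⟩ | ⟨k, hk⟩
    · exact ⟨k, show 2 * k = n by omega⟩
    · exfalso; apply hn
      subst hk
      have harg : -(1/2 : ℝ) * ((2*k+1 : ℕ) : ℝ) + (1 - 1/2) = -(k : ℝ) := by push_cast; ring
      simp only [hf, harg, Real.Gamma_neg_nat_eq_zero, mul_zero, div_zero]
  rw [← hinj.tsum_eq hsupp]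
  have hsqrt : Real.sqrt Real.pi ≠ 0 := by positivity
  have hkey : ∀ k : ℕ, f (2 * k) = (1 / Real.sqrt Real.pi) * ((-z^2/4) ^ k / k.factorial) := by
    intro k
    have harg : -(1/2 : ℝ) * ((2*k : ℕ) : ℝ) + (1 - 1/2) = 1/2 - (k : ℝ) := by push_cast; ring
    have hpow : (-z) ^ (2*k) = (z^2) ^ k := by
      rw [pow_mul]; congr 1; ring
    have h4 : ((-4 : ℝ))^k ≠ 0 := pow_ne_zero _ (by norm_num)
    have hkf : ((k.factorial : ℝ)) ≠ 0 := Nat.cast_ne_zero.2 (Nat.factorial_ne_zero _)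
    have h2kf : (((2*k).factorial : ℝ)) ≠ 0 := Nat.cast_ne_zero.2 (Nat.factorial_ne_zero _)
    have hp : ((-z^2/4 : ℝ))^k = (z^2)^k / (-4)^k := by
      rw [show (-z^2/4 : ℝ) = z^2 / (-4) by ring, div_pow]
    simp only [hf, harg, gamma_half_sub, hpow, hp]
    field_simp
    try ring
    try tauto
  calc (∑' k : ℕ, f (2 * k))
      = ∑' k : ℕ, (1 / Real.sqrt Real.pi) * ((-z^2/4) ^ k / k.factorial) := by
        exact tsum_congr hkey
    _ = (1 / Real.sqrt Real.pi) * ∑' k : ℕ, (-z^2/4) ^ k / k.factorial := tsum_mul_left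
    _ = (1 / Real.sqrt Real.pi) * Real.exp (-z ^ 2 / 4) := by
        rw [Real.exp_eq_exp_ℝ, NormedSpace.exp_eq_tsum_div]
end

section
/- The Hermite functions Ĥ_n(x) := π^{−1/4}(2^n n!)^{−1/2} e^{−x²/2} H_n(x), where H_n is the physicists' Hermite polynomial, satisfy ∫_{−∞}^{∞} Ĥ_n'(x) Ĥ_m'(x) dx = −√(n(n−1))/2 if m = n−2, n + 1/2 if m = n, −√((n+2)(n+1))/2 if m = n+2, and 0 otherwise. -/
/-- Physicists' Hermite polynomial function via Rodrigues' formula. -/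
noncomputable def hermiteFn (n : ℕ) (x : ℝ) : ℝ :=
  (-1) ^ n * Real.exp (x ^ 2) * iteratedDeriv n (fun y => Real.exp (-y ^ 2)) x

/-- Normalized Hermite functions. -/
noncomputable def hermiteHat (n : ℕ) (x : ℝ) : ℝ :=
  Real.pi ^ (-(1 / 4) : ℝ) * ((2 ^ n * n.factorial : ℝ)) ^ (-(1 / 2) : ℝ) *
    Real.exp (-x ^ 2 / 2) * hermiteFn n x

/-! The derivative of `Ĥₙ = cₙ Hₙ e^{-x²/2}` is `cₙ (Hₙ' - x Hₙ) e^{-x²/2}`; with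
`Hₙ' = 2n Hₙ₋₁` and `Hₙ₊₁ = 2x Hₙ - Hₙ'` this is the ladder relation
`Ĥₙ' = √(n/2) Ĥₙ₋₁ - √((n+1)/2) Ĥₙ₊₁`.
The `Ĥₙ` are orthonormal, because `∫ Hⱼ Hₖ e^{-x²} = δⱼₖ 2ᵏ k! √π` by repeated integration by parts
against `Hₖ₊₁ e^{-x²} = -(Hₖ e^{-x²})'`. Expanding `∫ Ĥₙ' Ĥₘ'` with the ladder relation therefore
leaves four Kronecker deltas. -/

open Real MeasureTheory Polynomial

noncomputable def physHermite : ℕ → ℝ[X]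
  | 0 => 1
  | n + 1 => 2 * X * physHermite n - derivative (physHermite n)

lemma physHermite_succ (n : ℕ) :
    physHermite (n + 1) = 2 * X * physHermite n - derivative (physHermite n) := rfl

lemma derivative_physHermite_succ (n : ℕ) :
    derivative (physHermite (n + 1)) = 2 * ((n : ℝ[X]) + 1) * physHermite n := by
  induction n with
  | zero => simp [physHermite]
  | succ n ih =>
    rw [physHermite_succ (n + 1), derivative_sub, ih]
    simp only [derivative_mul, derivative_ofNat, derivative_X, derivative_natCast,
      derivative_add, derivative_one, ih]
    rw [physHermite_succ]
    push_cast
    ring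

lemma derivative_physHermite (n : ℕ) :
    derivative (physHermite n) = 2 * (n : ℝ[X]) * physHermite (n - 1) := by
  cases n with
  | zero => simp [physHermite]
  | succ n => rw [derivative_physHermite_succ]; push_cast; rfl

lemma hasDerivAt_physHermite_mul_exp_neg_sq (n : ℕ) (x : ℝ) :
    HasDerivAt (fun y => (physHermite n).eval y * exp (-y ^ 2))
      (-((physHermite (n + 1)).eval x * exp (-x ^ 2))) x := by
  have hexp : HasDerivAt (fun y : ℝ => exp (-y ^ 2)) (exp (-x ^ 2) * -(2 * x)) x := by
    simpa using ((hasDerivAt_pow 2 x).neg).exp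
  refine (((physHermite n).hasDerivAt x).fun_mul hexp).congr_deriv ?_
  rw [physHermite_succ]
  simp only [eval_sub, eval_mul, eval_ofNat, eval_X]
  ring

lemma iteratedDeriv_exp_neg_sq (n : ℕ) :
    iteratedDeriv n (fun y => exp (-y ^ 2)) =
      fun x => (-1) ^ n * ((physHermite n).eval x * exp (-x ^ 2)) := by
  induction n with
  | zero => ext x; simp [physHermite]
  | succ n ih =>
    ext x
    rw [iteratedDeriv_succ, ih, ((hasDerivAt_physHermite_mul_exp_neg_sq n x).const_mul _).deriv]
    ring

lemma hermiteFn_eq_eval_physHermite (n : ℕ) (x : ℝ) : hermiteFn n x = (physHermite n).eval x := by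
  rw [hermiteFn, iteratedDeriv_exp_neg_sq]
  have hexp : exp (x ^ 2) * exp (-x ^ 2) = 1 := by rw [← exp_add]; simp
  calc _ = ((-1) ^ n) ^ 2 * (exp (x ^ 2) * exp (-x ^ 2)) * (physHermite n).eval x := by ring
    _ = _ := by rw [hexp, ← pow_mul, mul_comm n 2, pow_mul]; simp

lemma integrable_eval_mul_exp_neg_sq (p : ℝ[X]) :
    Integrable (fun x => p.eval x * exp (-x ^ 2)) := by
  have hmono (k : ℕ) : Integrable (fun x : ℝ => x ^ k * exp (-x ^ 2)) := by
    simpa [rpow_natCast] using integrable_rpow_mul_exp_neg_mul_sq (b := 1) one_pos (s := k)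
      (by linarith [k.cast_nonneg (α := ℝ)])
  simp_rw [eval_eq_sum_range, Finset.sum_mul, mul_assoc]
  exact integrable_finsetSum _ fun i _ => (hmono i).const_mul _

lemma integrable_eval_mul_eval_mul_exp_neg_sq (p q : ℝ[X]) :
    Integrable (fun x => p.eval x * (q.eval x * exp (-x ^ 2))) := by
  simpa [mul_assoc] using integrable_eval_mul_exp_neg_sq (p * q)

lemma integral_physHermite_succ_mul (n : ℕ) (p : ℝ[X]) :
    ∫ x, p.eval x * ((physHermite (n + 1)).eval x * exp (-x ^ 2)) =
      ∫ x, (derivative p).eval x * ((physHermite n).eval x * exp (-x ^ 2)) := by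
  have hibp := integral_mul_deriv_eq_deriv_mul_of_integrable
    (u := fun x => p.eval x) (v := fun x => (physHermite n).eval x * exp (-x ^ 2))
    (fun x _ => p.hasDerivAt x) (fun x _ => hasDerivAt_physHermite_mul_exp_neg_sq n x)
    (by simpa [Pi.mul_def] using
      (integrable_eval_mul_eval_mul_exp_neg_sq p (physHermite (n + 1))).neg)
    (integrable_eval_mul_eval_mul_exp_neg_sq _ _) (integrable_eval_mul_eval_mul_exp_neg_sq _ _)
  simpa only [mul_neg, integral_neg, neg_inj] using hibp

lemma integral_physHermite_mul_physHermite (j k : ℕ) :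
    ∫ x, (physHermite j).eval x * ((physHermite k).eval x * exp (-x ^ 2)) =
      if j = k then 2 ^ k * k.factorial * √π else 0 := by
  induction k generalizing j with
  | zero =>
    cases j with
    | zero => simpa [physHermite] using integral_gaussian 1
    | succ j => simpa [physHermite] using integral_physHermite_succ_mul j 1
  | succ k ih =>
    rw [integral_physHermite_succ_mul]
    cases j with
    | zero => simp [physHermite]
    | succ j =>
      simp_rw [derivative_physHermite_succ, eval_mul, eval_add, eval_ofNat, eval_natCast, eval_one,
        mul_assoc, integral_const_mul, ih]
      by_cases hjk : j = k
      · subst hjk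
        simp only [if_true, Nat.factorial_succ]
        push_cast
        ring
      · simp [hjk]

noncomputable def hermiteConst (n : ℕ) : ℝ :=
  π ^ (-(1 / 4) : ℝ) * ((2 ^ n * n.factorial : ℝ)) ^ (-(1 / 2) : ℝ)

lemma hermiteHat_eq (n : ℕ) :
    hermiteHat n = fun x => hermiteConst n * ((physHermite n).eval x * exp (-x ^ 2 / 2)) := by
  ext x
  rw [hermiteHat, hermiteFn_eq_eval_physHermite, hermiteConst]
  ring

lemma hermiteConst_sq_mul (n : ℕ) : hermiteConst n ^ 2 * (2 ^ n * n.factorial * √π) = 1 := by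
  have hA : (0 : ℝ) < 2 ^ n * n.factorial := by positivity
  rw [hermiteConst, mul_pow, ← rpow_mul_natCast pi_pos.le, ← rpow_mul_natCast hA.le, sqrt_eq_rpow]
  calc _ = (π ^ (-(1 / 2) : ℝ) * π ^ (1 / 2 : ℝ)) *
        ((2 ^ n * n.factorial : ℝ) ^ (-1 : ℝ) * (2 ^ n * n.factorial)) := by norm_num; ring
    _ = 1 := by
      rw [← rpow_add pi_pos, rpow_neg_one, inv_mul_cancel₀ hA.ne']
      norm_num

lemma hermiteConst_eq_two_mul_sqrt_mul_succ (n : ℕ) :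
    hermiteConst n = 2 * √(((n : ℝ) + 1) / 2) * hermiteConst (n + 1) := by
  have hA : (0 : ℝ) ≤ 2 ^ n * n.factorial := by positivity
  have hB : (0 : ℝ) < 2 * ((n : ℝ) + 1) := by positivity
  have hsqrt : 2 * √(((n : ℝ) + 1) / 2) = (2 * ((n : ℝ) + 1)) ^ (1 / 2 : ℝ) := by
    rw [← sqrt_eq_rpow, show 2 * ((n : ℝ) + 1) = 2 ^ 2 * (((n : ℝ) + 1) / 2) by ring,
      sqrt_mul (by positivity), sqrt_sq zero_le_two]
  have hsucc :
      (2 ^ (n + 1) * (n + 1).factorial : ℝ) = 2 * ((n : ℝ) + 1) * (2 ^ n * n.factorial) := by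
    push_cast [Nat.factorial_succ, pow_succ]
    ring
  rw [hermiteConst, hermiteConst, hsucc, mul_rpow hB.le hA, hsqrt]
  calc _ = π ^ (-(1 / 4) : ℝ) * (2 ^ n * n.factorial : ℝ) ^ (-(1 / 2) : ℝ) *
        ((2 * ((n : ℝ) + 1)) ^ (1 / 2 : ℝ) * (2 * ((n : ℝ) + 1)) ^ (-(1 / 2) : ℝ)) := by
        rw [← rpow_add hB]; norm_num
    _ = _ := by ring

lemma hermiteHat_mul_hermiteHat (j k : ℕ) (x : ℝ) :
    hermiteHat j x * hermiteHat k x =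
      hermiteConst j * hermiteConst k *
        ((physHermite j).eval x * ((physHermite k).eval x * exp (-x ^ 2))) := by
  have hexp : exp (-x ^ 2 / 2) * exp (-x ^ 2 / 2) = exp (-x ^ 2) := by rw [← exp_add]; ring_nf
  rw [hermiteHat_eq, hermiteHat_eq, ← hexp]
  ring

lemma integrable_hermiteHat_mul_hermiteHat (j k : ℕ) :
    Integrable (fun x => hermiteHat j x * hermiteHat k x) := by
  simpa only [hermiteHat_mul_hermiteHat] using
    (integrable_eval_mul_eval_mul_exp_neg_sq (physHermite j) (physHermite k)).const_mul _

lemma integral_hermiteHat_mul_hermiteHat (j k : ℕ) :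
    ∫ x, hermiteHat j x * hermiteHat k x = if j = k then 1 else 0 := by
  simp_rw [hermiteHat_mul_hermiteHat, integral_const_mul, integral_physHermite_mul_physHermite]
  split_ifs with hjk
  · subst hjk
    rw [← hermiteConst_sq_mul j]
    ring
  · simp

-- For `n = 0` the junk term `hermiteHat (0 - 1)` carries the coefficient `√(0 / 2) = 0`.
lemma hasDerivAt_hermiteHat (n : ℕ) (x : ℝ) :
    HasDerivAt (hermiteHat n)
      (√((n : ℝ) / 2) * hermiteHat (n - 1) x - √(((n : ℝ) + 1) / 2) * hermiteHat (n + 1) x) x := by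
  have hexp : HasDerivAt (fun y : ℝ => exp (-y ^ 2 / 2)) (exp (-x ^ 2 / 2) * -x) x := by
    refine (((hasDerivAt_pow 2 x).fun_neg.div_const 2).exp).congr_deriv ?_
    push_cast
    ring
  rw [hermiteHat_eq]
  refine ((((physHermite n).hasDerivAt x).fun_mul hexp).const_mul _).congr_deriv ?_
  have hpred : √((n : ℝ) / 2) * hermiteConst (n - 1) = n * hermiteConst n := by
    cases n with
    | zero => simp
    | succ n =>
      push_cast
      rw [hermiteConst_eq_two_mul_sqrt_mul_succ n, ← mul_assoc, mul_left_comm,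
        mul_self_sqrt (by positivity)]
      ring
  have hsucc := hermiteConst_eq_two_mul_sqrt_mul_succ n
  simp only [hermiteHat_eq, derivative_physHermite, physHermite_succ, eval_sub, eval_mul,
    eval_ofNat, eval_natCast, eval_X]
  linear_combination -(exp (-x ^ 2 / 2) * (physHermite (n - 1)).eval x) * hpred
    - (exp (-x ^ 2 / 2) * ((physHermite n).eval x * x - n * (physHermite (n - 1)).eval x)) * hsucc

lemma integral_sub_mul_sub {α : Type*} [MeasurableSpace α] {μ : Measure α} {f₁ f₂ g₁ g₂ : α → ℝ}
    (a b c d : ℝ) (h₁₁ : Integrable (fun x => f₁ x * g₁ x) μ)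
    (h₁₂ : Integrable (fun x => f₁ x * g₂ x) μ) (h₂₁ : Integrable (fun x => f₂ x * g₁ x) μ)
    (h₂₂ : Integrable (fun x => f₂ x * g₂ x) μ) :
    ∫ x, (a * f₁ x - b * f₂ x) * (c * g₁ x - d * g₂ x) ∂μ =
      a * c * ∫ x, f₁ x * g₁ x ∂μ - a * d * ∫ x, f₁ x * g₂ x ∂μ
        - b * c * ∫ x, f₂ x * g₁ x ∂μ + b * d * ∫ x, f₂ x * g₂ x ∂μ := by
  have hexpand : (fun x => (a * f₁ x - b * f₂ x) * (c * g₁ x - d * g₂ x)) = fun x =>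
      a * c * (f₁ x * g₁ x) - a * d * (f₁ x * g₂ x)
        - b * c * (f₂ x * g₁ x) + b * d * (f₂ x * g₂ x) := by
    ext x; ring
  rw [hexpand, integral_add, integral_sub, integral_sub, integral_const_mul, integral_const_mul,
    integral_const_mul, integral_const_mul]
  all_goals fun_prop

lemma integral_deriv_hermiteHat_mul_deriv_hermiteHat (n m : ℕ) :
    ∫ x, deriv (hermiteHat n) x * deriv (hermiteHat m) x =
      √((n : ℝ) / 2) * √((m : ℝ) / 2) * (if n - 1 = m - 1 then 1 else 0)
        - √((n : ℝ) / 2) * √(((m : ℝ) + 1) / 2) * (if n - 1 = m + 1 then 1 else 0)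
        - √(((n : ℝ) + 1) / 2) * √((m : ℝ) / 2) * (if n + 1 = m - 1 then 1 else 0)
        + √(((n : ℝ) + 1) / 2) * √(((m : ℝ) + 1) / 2) * (if n + 1 = m + 1 then 1 else 0) := by
  simp_rw [(hasDerivAt_hermiteHat _ _).deriv]
  rw [integral_sub_mul_sub _ _ _ _ (integrable_hermiteHat_mul_hermiteHat _ _)
    (integrable_hermiteHat_mul_hermiteHat _ _) (integrable_hermiteHat_mul_hermiteHat _ _)
    (integrable_hermiteHat_mul_hermiteHat _ _)]
  simp_rw [integral_hermiteHat_mul_hermiteHat]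

lemma integral_deriv_hermiteHat_mul_self (n : ℕ) :
    ∫ x, deriv (hermiteHat n) x * deriv (hermiteHat n) x = n + 1 / 2 := by
  rw [integral_deriv_hermiteHat_mul_deriv_hermiteHat, if_pos rfl, if_neg (by omega),
    if_neg (by omega), if_pos rfl, mul_self_sqrt (by positivity), mul_self_sqrt (by positivity)]
  ring

lemma integral_deriv_hermiteHat_add_two_mul (n : ℕ) :
    ∫ x, deriv (hermiteHat (n + 2)) x * deriv (hermiteHat n) x =
      -√(((n : ℝ) + 2) * (n + 1)) / 2 := by
  rw [integral_deriv_hermiteHat_mul_deriv_hermiteHat, if_neg (by omega), if_pos (by omega),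
    if_neg (by omega), if_neg (by omega)]
  simp only [mul_zero, mul_one, sub_zero, add_zero, zero_sub]
  rw [← sqrt_mul (by positivity),
    show ((n + 2 : ℕ) : ℝ) / 2 * (((n : ℝ) + 1) / 2) = ((n + 2) * (n + 1)) / 2 ^ 2 by
      push_cast; ring,
    sqrt_div' _ (by positivity), sqrt_sq zero_le_two]
  ring

lemma integral_deriv_hermiteHat_mul_of_ne {n m : ℕ} (h₀ : n ≠ m) (h₁ : m + 2 ≠ n) (h₂ : n + 2 ≠ m) :
    ∫ x, deriv (hermiteHat n) x * deriv (hermiteHat m) x = 0 := by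
  rw [integral_deriv_hermiteHat_mul_deriv_hermiteHat, if_neg (show n - 1 ≠ m + 1 by omega),
    if_neg (show n + 1 ≠ m - 1 by omega), if_neg (show n + 1 ≠ m + 1 by omega)]
  split_ifs
  · obtain rfl | rfl : n = 0 ∨ m = 0 := by omega
    all_goals simp
  · simp

theorem stmt_14 (n m : ℕ) :
    (∫ x : ℝ, deriv (hermiteHat n) x * deriv (hermiteHat m) x) =
      if m + 2 = n then -Real.sqrt ((n : ℝ) * ((n : ℝ) - 1)) / 2
      else if m = n then (n : ℝ) + 1 / 2
      else if m = n + 2 then -Real.sqrt (((n : ℝ) + 2) * ((n : ℝ) + 1)) / 2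
      else 0 := by
  split_ifs with h₁ h₂ h₃
  · subst h₁
    rw [integral_deriv_hermiteHat_add_two_mul]
    push_cast
    ring_nf
  · subst h₂
    exact integral_deriv_hermiteHat_mul_self m
  · subst h₃
    simp_rw [mul_comm (deriv (hermiteHat n) _)]
    exact integral_deriv_hermiteHat_add_two_mul n
  · exact integral_deriv_hermiteHat_mul_of_ne (Ne.symm h₂) h₁ (Ne.symm h₃)
end
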